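/- arXiv:2111.00388 — 2 statements merged into one kernel-verified Lean document; each statement's English description precedes it below -/
import Mathlib

section
/- Let R be a commutative ℚ-algebra and suppose y₁,…,y_n ∈ R are such that R is generated as a ℚ-algebra by y₁,…,y_n, and R is abstractly isomorphic as a ℚ-algebra to a polynomial ring in n variables. Then y₁,…,y_n are algebraically independent over ℚ, i.e., the ℚ-algebra homomorphism ℚ[X₁,…,X_n] → R sending X_i ↦ y_i is an isomorphism. -/
/-!
Since the `yᵢ` generate `R`, evaluation at `y` is a surjection `ℚ[X₁, …, Xₙ] → R`; composed with
an isomorphism `R ≃ ℚ[X₁, …, Xₙ]` it becomes a surjective endomorphism of a Noetherian ring.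
Such an endomorphism is injective: the kernels of its iterates form an ascending chain of ideals,
and once `ker f^N = ker f^(N+1)`, any `a = f^N b` with `f a = 0` is already `0`.
-/

theorem RingHom.injective_of_surjective_of_isNoetherianRing {A : Type*} [CommRing A]
    [IsNoetherianRing A] (f : A →+* A) (hf : Function.Surjective f) : Function.Injective f := by
  have ker_iterate_mono : Monotone fun k : ℕ => RingHom.ker (f ^ k) := by
    refine monotone_nat_of_le_succ fun k a ha => ?_
    simp only [RingHom.mem_ker, RingHom.coe_pow] at ha ⊢
    rw [Function.iterate_succ_apply', ha, map_zero]
  obtain ⟨N, hN⟩ := monotone_stabilizes_iff_noetherian.2 ‹IsNoetherian A A› ⟨_, ker_iterate_mono⟩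
  refine (injective_iff_map_eq_zero f).2 fun a ha => ?_
  obtain ⟨b, rfl⟩ := hf.iterate N a
  have hb : b ∈ RingHom.ker (f ^ (N + 1)) := by
    rwa [RingHom.mem_ker, RingHom.coe_pow, Function.iterate_succ_apply']
  have hstable : RingHom.ker (f ^ N) = RingHom.ker (f ^ (N + 1)) := hN (N + 1) N.le_succ
  rw [← hstable] at hb
  simpa only [RingHom.mem_ker, RingHom.coe_pow] using hb

theorem RingHom.injective_of_surjective_of_ringEquiv {A B : Type*} [CommRing A]
    [IsNoetherianRing A] [CommRing B] (f : A →+* B) (hf : Function.Surjective f) (e : B ≃+* A) :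
    Function.Injective f :=
  Function.Injective.of_comp (f := e) <|
    ((e : B →+* A).comp f).injective_of_surjective_of_isNoetherianRing (e.surjective.comp hf)

/-- If a commutative `ℚ`-algebra `R` is generated by `n` elements `y₁, …, y_n` and is
abstractly isomorphic (as a `ℚ`-algebra) to a polynomial ring in `n` variables, then the
evaluation map `ℚ[X₁, …, X_n] → R`, `X_i ↦ y_i`, is an isomorphism; in particular the `y_i`
are algebraically independent over `ℚ`. -/
theorem stmt_2 (R : Type*) [CommRing R] [Algebra ℚ R] (n : ℕ) (y : Fin n → R)
    (hgen : Algebra.adjoin ℚ (Set.range y) = ⊤)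
    (hiso : Nonempty (R ≃ₐ[ℚ] MvPolynomial (Fin n) ℚ)) :
    Function.Bijective (MvPolynomial.aeval (R := ℚ) y) ∧ AlgebraicIndependent ℚ y := by
  obtain ⟨e⟩ := hiso
  have hsurj : Function.Surjective (MvPolynomial.aeval (R := ℚ) y) := by
    rw [← AlgHom.range_eq_top, ← Algebra.adjoin_range_eq_range_aeval, hgen]
  have hinj : Function.Injective (MvPolynomial.aeval (R := ℚ) y) :=
    RingHom.injective_of_surjective_of_ringEquiv (MvPolynomial.aeval y).toRingHom hsurj
      e.toRingEquiv
  exact ⟨⟨hinj, hsurj⟩, hinj⟩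
end

section
/- In the setting of the previous statement, the isomorphism class of the cochain complex (C^*, d^*) is independent of the choice of sign assignment: if s and s' are two sign assignments on the edges of the n-cube with all square sign products equal to −1, then the resulting complexes are isomorphic as cochain complexes. -/
/-!
The ratio `σ' / σ` of two sign assignments, viewed in `ℤˣ`, has product `1` around every
square of the cube: it is a `1`-cocycle. The squares fill the cube in, so the cocycle is a
coboundary, `σ'(e) / σ(e) = ε(w) / ε(v)` for every edge `e : v → w`, with `ε(v)` the product of
the ratios along any monotone path to `v`. Multiplying each summand `F(v)` by `ε(v)` then
intertwines the two differentials.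
-/

namespace CubeComplexStmt5

/-- The Manhattan norm `|v|` of a vertex of the cube `{0,1}ⁿ`. -/
def deg {n : ℕ} (v : Fin n → Bool) : ℕ :=
  (Finset.univ.filter fun i => v i = true).card

lemma update_le {n : ℕ} (v : Fin n → Bool) (j : Fin n) :
    Function.update v j false ≤ v := by
  intro k
  by_cases hk : k = j <;> simp [hk, Function.update]

lemma deg_update {n : ℕ} {i : ℕ} (v : Fin n → Bool) (j : Fin n)
    (hv : v j = true) (hd : deg v = i + 1) : deg (Function.update v j false) = i := by
  have h : (Finset.univ.filter fun k => Function.update v j false k = true) =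
      (Finset.univ.filter fun k => v k = true).erase j := by
    ext k
    by_cases hk : k = j <;> simp [hk, Function.update, hv]
  have hj : j ∈ Finset.univ.filter fun k => v k = true := by simp [hv]
  simp only [deg, h, Finset.card_erase_of_mem hj]
  simp only [deg] at hd
  omega

variable {n : ℕ} (M : (Fin n → Bool) → Type) [∀ v, AddCommGroup (M v)]
  [∀ v, Module ℚ (M v)]

/-- The degree-`i` chain group of the cube complex: the direct sum (here: product, the index
set being finite) of the modules `F(v)` over the vertices `v` with `|v| = i`. -/
def Ch (i : ℕ) : Type :=
  ∀ v : {v : Fin n → Bool // deg v = i}, M v.1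

instance (i : ℕ) : AddCommGroup (Ch M i) := by unfold Ch; infer_instance
instance (i : ℕ) : Module ℚ (Ch M i) := by unfold Ch; infer_instance

/-- The differential of the cube complex determined by a functor
(`Fmap`, functorial data on the cube poset) and a sign assignment `s`:
`d x (w) = ∑_{edges v → w} s(e) · F(e)(x v)`. -/
noncomputable def dCube
    (Fmap : ∀ {v w : Fin n → Bool}, v ≤ w → (M v →ₗ[ℚ] M w))
    (s : (Fin n → Bool) → Fin n → ℤ) (i : ℕ) (x : Ch M i) : Ch M (i + 1) :=
  fun w => ∑ j : Fin n,
    if h : w.1 j = true then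
      s (Function.update w.1 j false) j •
        Fmap (update_le w.1 j) (x ⟨Function.update w.1 j false, deg_update w.1 j h w.2⟩)
    else 0

open Function

lemma deg_update_false_add_one (v : Fin n → Bool) {j : Fin n} (hj : v j = true) :
    deg (update v j false) + 1 = deg v := by
  have hpos : 0 < deg v := Finset.card_pos.2 ⟨j, by simp [hj]⟩
  rw [deg_update v j hj (Nat.succ_pred_eq_of_pos hpos).symm]
  exact Nat.succ_pred_eq_of_pos hpos

lemma update_false_update_true {w : Fin n → Bool} {j : Fin n} (hj : w j = true) :
    update (update w j false) j true = w := by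
  rw [update_idem, update_eq_self_iff.2 hj.symm]

section Cocycle

variable {G : Type*} [CommMonoid G]

def IsCocycle (t : (Fin n → Bool) → Fin n → G) : Prop :=
  ∀ (u : Fin n → Bool) (i j : Fin n), i ≠ j → u i = false → u j = false →
    t u i * t (update u i true) j = t u j * t (update u j true) i

/-- The product of the labels along a monotone path from the bottom vertex to `v`, the path
being chosen arbitrarily. -/
noncomputable def pathProd (t : (Fin n → Bool) → Fin n → G) (v : Fin n → Bool) : G :=
  if h : ∃ j, v j = true then
    t (update v h.choose false) h.choose * pathProd t (update v h.choose false)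
  else 1
termination_by deg v
decreasing_by have := deg_update_false_add_one v h.choose_spec; omega

/-- By strong induction on `deg v`: removing first `i` then `j`, or first `j` then `i`, are the
two sides of a square. -/
theorem IsCocycle.pathProd_eq_mul {t : (Fin n → Bool) → Fin n → G} (ht : IsCocycle t)
    {v : Fin n → Bool} {j : Fin n} (hj : v j = true) :
    pathProd t v = t (update v j false) j * pathProd t (update v j false) := by
  induction hd : deg v using Nat.strong_induction_on generalizing v j with
  | _ k IH =>
  have hv : ∃ j, v j = true := ⟨j, hj⟩
  rw [pathProd, dif_pos hv]
  set i := hv.choose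
  have hi : v i = true := hv.choose_spec
  obtain rfl | hij := eq_or_ne i j
  · rfl
  have hji : (update v i false) j = true := by rwa [update_of_ne hij.symm]
  have hij' : (update v j false) i = true := by rwa [update_of_ne hij]
  have hsquare := ht (update (update v i false) j false) i j hij
    (by simp [hij]) (by simp)
  rw [update_comm hij, update_false_update_true hij', ← update_comm hij,
    update_false_update_true hji] at hsquare
  rw [IH _ (by have := deg_update_false_add_one v hi; omega) hji rfl,
    IH _ (by have := deg_update_false_add_one v hj; omega) hij' rfl, update_comm hij.symm,
    ← mul_assoc, ← mul_assoc, mul_comm (t _ i), ← hsquare, mul_comm (t _ i)]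

end Cocycle

lemma isCocycle_div_of_square_eq_neg_one {σ σ' : (Fin n → Bool) → Fin n → ℤˣ}
    (hσ : ∀ (v : Fin n → Bool) (i j : Fin n), i ≠ j → v i = false → v j = false →
      σ v i * σ (update v i true) j * (σ v j * σ (update v j true) i) = -1)
    (hσ' : ∀ (v : Fin n → Bool) (i j : Fin n), i ≠ j → v i = false → v j = false →
      σ' v i * σ' (update v i true) j * (σ' v j * σ' (update v j true) i) = -1) :
    IsCocycle (σ' / σ) := by
  intro u i j hij hi hj
  simp only [Pi.div_apply, div_eq_mul_inv, Int.units_inv_eq_self]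
  refine (mul_eq_one_iff_eq_inv.1 ?_).trans (Int.units_inv_eq_self _)
  calc _ = σ u i * σ (update u i true) j * (σ u j * σ (update u j true) i) *
        (σ' u i * σ' (update u i true) j * (σ' u j * σ' (update u j true) i)) := by ac_rfl
    _ = 1 := by rw [hσ u i j hij hi hj, hσ' u i j hij hi hj, neg_one_mul, neg_neg]

def signTwist (ε : (Fin n → Bool) → ℤˣ) (i : ℕ) : Ch M i ≃ₗ[ℚ] Ch M i :=
  LinearEquiv.piCongrRight fun v : {v : Fin n → Bool // deg v = i} =>
    DistribMulAction.toLinearEquiv ℚ (M v.1) (ε v.1)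

@[simp]
lemma signTwist_apply (ε : (Fin n → Bool) → ℤˣ) (i : ℕ) (x : Ch M i)
    (v : {v : Fin n → Bool // deg v = i}) : signTwist M ε i x v = ε v.1 • x v :=
  rfl

lemma signTwist_dCube (Fmap : ∀ {v w : Fin n → Bool}, v ≤ w → (M v →ₗ[ℚ] M w))
    {σ σ' : (Fin n → Bool) → Fin n → ℤˣ} {ε : (Fin n → Bool) → ℤˣ}
    (hε : ∀ (w : Fin n → Bool) (j : Fin n), w j = true →
      ε w * σ (update w j false) j = σ' (update w j false) j * ε (update w j false))
    (i : ℕ) (x : Ch M i) :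
    signTwist M ε (i + 1) (dCube M Fmap (fun v j => σ v j) i x) =
      dCube M Fmap (fun v j => σ' v j) i (signTwist M ε i x) := by
  funext w
  simp only [signTwist_apply, dCube, Finset.smul_sum]
  refine Finset.sum_congr rfl fun j _ => ?_
  split_ifs with hj
  · simp only [Units.smul_def, map_zsmul, smul_smul, ← Units.val_mul, hε w j hj]
  · exact smul_zero _

theorem stmt_5
    (Fmap : ∀ {v w : Fin n → Bool}, v ≤ w → (M v →ₗ[ℚ] M w))
    (s s' : (Fin n → Bool) → Fin n → ℤ)
    (hsign : ∀ v i, s v i = 1 ∨ s v i = -1)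
    (hsign' : ∀ v i, s' v i = 1 ∨ s' v i = -1)
    (hsq : ∀ (v : Fin n → Bool) (i j : Fin n), i ≠ j → v i = false → v j = false →
      s v i * s (Function.update v i true) j *
        (s v j * s (Function.update v j true) i) = -1)
    (hsq' : ∀ (v : Fin n → Bool) (i j : Fin n), i ≠ j → v i = false → v j = false →
      s' v i * s' (Function.update v i true) j *
        (s' v j * s' (Function.update v j true) i) = -1) :
    ∃ e : ∀ i : ℕ, Ch M i ≃ₗ[ℚ] Ch M i,
      ∀ (i : ℕ) (x : Ch M i),
        e (i + 1) (dCube M (fun h => Fmap h) s i x) =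
          dCube M (fun h => Fmap h) s' i (e i x) := by
  obtain ⟨σ, rfl⟩ : ∃ σ : (Fin n → Bool) → Fin n → ℤˣ, (fun v i => (σ v i : ℤ)) = s :=
    ⟨fun v i => (Int.isUnit_iff.2 (hsign v i)).unit, rfl⟩
  obtain ⟨σ', rfl⟩ : ∃ σ' : (Fin n → Bool) → Fin n → ℤˣ, (fun v i => (σ' v i : ℤ)) = s' :=
    ⟨fun v i => (Int.isUnit_iff.2 (hsign' v i)).unit, rfl⟩
  have hσ : IsCocycle (σ' / σ) := isCocycle_div_of_square_eq_neg_one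
    (fun v i j hij hi hj => Units.ext (by simpa using hsq v i j hij hi hj))
    (fun v i j hij hi hj => Units.ext (by simpa using hsq' v i j hij hi hj))
  refine ⟨signTwist M (pathProd (σ' / σ)), signTwist_dCube M Fmap fun w j hj => ?_⟩
  rw [hσ.pathProd_eq_mul hj, Pi.div_apply, Pi.div_apply, mul_right_comm, div_mul_cancel]

end CubeComplexStmt5
end
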